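/- Let N ≥ 2 be an integer that is not prime, and let p be a prime number dividing N. If p = 5 or p ≡ ±1 (mod 5), then N is monomially reducible. -/

import Mathlib

/-! If `K k (j + 2) = ±1` for some `j`, then with `β = K k (j + 2) * K k (j + 1)` the tuple
`(β, k, …, k, β)` with `j + 2` entries `k` is a solution, because conjugating
`mat k ^ (j + 2)` by `mat β` gives `∓1` (its determinant is `1`). If moreover
`K k 0, …, K k (j + 3)` are all nonzero, the `k`-monomial minimal solution has at least `j + 5`
entries, so `(k, …, k) = (k - β, k, …, k, k - β) ⊕ (β, k, …, k, β)` is reducible.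

If `p ^ 2 ∣ N`, take `k = N / p`: then `k ^ 2 = 0`, so `K k 2 = -1` and `K k 3 = -2k ≠ 0` since `p`
is odd. Otherwise `N = p * m` with `p` and `m` coprime and `m ≥ 2`. Quadratic reciprocity makes
`5` a square mod `p`, so `x ^ 2 = x + 1` has a root `ω` mod `p`; take `k ≡ ω [MOD p]` and
`k ≡ -1 [MOD m]`. Then `K k 3 = 1`, and for each `i ≤ 4`, `K k i` is nonzero mod `p` or mod `m`. -/

namespace Monomial

/-- The elementary matrix `[[a, -1], [1, 0]]` over `ZMod N`. -/
def mat {N : ℕ} (a : ZMod N) : Matrix (Fin 2) (Fin 2) (ZMod N) := !![a, -1; 1, 0]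

/-- `M [a₁, …, aₙ] = mat aₙ * ⋯ * mat a₁`. -/
def M {N : ℕ} (l : List (ZMod N)) : Matrix (Fin 2) (Fin 2) (ZMod N) :=
  (l.reverse.map mat).prod

/-- A tuple is a solution of (E_N) if the associated matrix is `±Id`. -/
def IsSolution {N : ℕ} (l : List (ZMod N)) : Prop := M l = 1 ∨ M l = -1

/-- The sum `(a₁,…,aₙ) ⊕ (b₁,…,bₘ) = (a₁+bₘ, a₂,…,aₙ₋₁, aₙ+b₁, b₂,…,bₘ₋₁)`. -/
def osum {N : ℕ} (u v : List (ZMod N)) : List (ZMod N) :=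
  (u.headI + v.getLastD 0) ::
    ((u.drop 1).dropLast ++ (u.getLastD 0 + v.headI) :: (v.drop 1).dropLast)

/-- Equivalence: `v` is a cyclic permutation of `u` or of the reversal of `u`. -/
def CyclicEquiv {N : ℕ} (u v : List (ZMod N)) : Prop :=
  (∃ i, v = u.rotate i) ∨ (∃ i, v = u.reverse.rotate i)

/-- A tuple is reducible if, up to equivalence, it is a sum of an `m`-tuple (`m ≥ 3`)
with a solution of size `l ≥ 3`. -/
def Reducible {N : ℕ} (c : List (ZMod N)) : Prop :=
  ∃ a b : List (ZMod N), 3 ≤ a.length ∧ 3 ≤ b.length ∧ IsSolution b ∧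
    CyclicEquiv c (osum a b)

/-- An irreducible solution: a solution which is not reducible (and `(0,0)` is
not considered irreducible). -/
def IrreducibleSol {N : ℕ} (c : List (ZMod N)) : Prop :=
  IsSolution c ∧ ¬ Reducible c ∧ c ≠ [0, 0]

/-- The size of the `k`-monomial minimal solution of (E_N): the least `n > 0` such
that the constant `n`-tuple `(k, …, k)` is a solution. -/
noncomputable def monomialMinimalSize (N : ℕ) (k : ZMod N) : ℕ :=
  sInf {n | 0 < n ∧ IsSolution (List.replicate n k)}

/-- `N` is monomially irreducible if, for every `k ≠ 0`, the `k`-monomial minimal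
solution of (E_N) is irreducible. -/
def MonomiallyIrreducible (N : ℕ) : Prop :=
  ∀ k : ZMod N, k ≠ 0 → IrreducibleSol (List.replicate (monomialMinimalSize N k) k)

/-- The continuant `Kₙ(x, …, x)` at a constant tuple: `K₀ = 1`, `K₁ = x`,
`Kₙ₊₂ = x * Kₙ₊₁ - Kₙ`. -/
def K {N : ℕ} (x : ZMod N) : ℕ → ZMod N
  | 0 => 1
  | 1 => x
  | n + 2 => x * K x (n + 1) - K x n

section

variable {N : ℕ}

lemma M_cons (x : ZMod N) (l : List (ZMod N)) : M (x :: l) = M l * mat x := by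
  simp [M]

lemma M_concat (l : List (ZMod N)) (x : ZMod N) : M (l ++ [x]) = mat x * M l := by
  simp [M]

lemma M_replicate (k : ZMod N) (n : ℕ) : M (List.replicate n k) = mat k ^ n := by
  simp [M, List.prod_replicate]

lemma det_mat (a : ZMod N) : (mat a).det = 1 := by
  simp [mat, Matrix.det_fin_two_of]

lemma mat_pow_add_two (k : ZMod N) (n : ℕ) :
    mat k ^ (n + 2) = !![K k (n + 2), -K k (n + 1); K k (n + 1), -K k n] := by
  induction n with
  | zero => simp [pow_two, mat, K, sub_eq_add_neg]
  | succ n ih =>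
    rw [pow_succ, ih, mat]
    ext i l
    fin_cases i <;> fin_cases l <;> simp [K, mul_comm, sub_eq_add_neg]

lemma mat_pow_succ_apply_one_zero (k : ZMod N) (n : ℕ) : (mat k ^ (n + 1)) 1 0 = K k n := by
  cases n with
  | zero => simp [mat, K]
  | succ n => simp [mat_pow_add_two]

lemma K_sq_sub_mul (k : ZMod N) (n : ℕ) :
    K k (n + 1) ^ 2 - K k (n + 2) * K k n = 1 := by
  have := congrArg Matrix.det (mat_pow_add_two k n)
  rw [Matrix.det_pow, det_mat, one_pow, Matrix.det_fin_two_of] at this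
  linear_combination -this

lemma M_cons_append_singleton (a b : ZMod N) (l : List (ZMod N)) :
    M (a :: l ++ [b]) = mat b * M l * mat a := by
  rw [M_concat, M_cons, mul_assoc]

lemma isSolution_cons_replicate_append (k : ZMod N) (j : ℕ)
    (hK : K k (j + 2) = 1 ∨ K k (j + 2) = -1) :
    IsSolution (K k (j + 2) * K k (j + 1) :: List.replicate (j + 2) k ++
      [K k (j + 2) * K k (j + 1)]) := by
  have hdet := K_sq_sub_mul k j
  rw [IsSolution, M_cons_append_singleton, M_replicate, mat_pow_add_two]
  generalize K k (j + 2) = ε at hK hdet ⊢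
  generalize K k (j + 1) = b at hdet ⊢
  generalize K k j = c at hdet ⊢
  have hsq : ε * ε = 1 := by rcases hK with rfl | rfl <;> simp
  have hM : mat (ε * b) * !![ε, -b; b, -c] * mat (ε * b) = -ε • 1 := by
    ext i l
    fin_cases i <;> fin_cases l <;> simp [mat, Matrix.mul_apply, Fin.sum_univ_two]
    · linear_combination (ε * b ^ 2 - c) * hsq - ε * hdet
    · linear_combination -b * hsq
    · linear_combination b * hsq
  rw [hM]
  rcases hK with rfl | rfl <;> simp

lemma reducible_replicate {k β : ZMod N} {j n : ℕ}
    (hb : IsSolution (β :: List.replicate (j + 1) k ++ [β])) (hn : j + 4 ≤ n) :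
    Reducible (List.replicate n k) := by
  obtain ⟨s, rfl⟩ := Nat.exists_eq_add_of_le hn
  refine ⟨(k - β) :: List.replicate (s + 1) k ++ [k - β], β :: List.replicate (j + 1) k ++ [β],
    by simp, by simp, hb, Or.inl ⟨0, ?_⟩⟩
  rw [List.rotate_zero, osum]
  simp only [List.cons_append, List.headI_cons, List.getLastD_cons, List.getLastD_concat,
    List.drop_succ_cons, List.drop_zero, List.dropLast_concat, sub_add_cancel]
  refine List.eq_replicate_iff.mpr ⟨by simp; omega, fun x hx => ?_⟩
  simp_all

lemma K_eq_zero_of_isSolution {k : ZMod N} {n : ℕ}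
    (h : IsSolution (List.replicate (n + 1) k)) : K k n = 0 := by
  rw [← mat_pow_succ_apply_one_zero, ← M_replicate]
  rcases h with h | h <;> simp [h]

lemma exists_isSolution_replicate [NeZero N] (k : ZMod N) :
    ∃ n, 0 < n ∧ IsSolution (List.replicate n k) := by
  obtain ⟨u, hu⟩ := (Matrix.isUnit_iff_isUnit_det _).mpr (det_mat k ▸ isUnit_one)
  obtain ⟨n, hn, hpow⟩ := (isOfFinOrder_of_finite u).exists_pow_eq_one
  exact ⟨n, hn, Or.inl (by rw [M_replicate, ← hu, ← Units.val_pow_eq_pow_val, hpow, Units.val_one])⟩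

lemma monomialMinimalSize_spec [NeZero N] (k : ZMod N) :
    0 < monomialMinimalSize N k ∧ IsSolution (List.replicate (monomialMinimalSize N k) k) :=
  Nat.sInf_mem (exists_isSolution_replicate k)

lemma not_monomiallyIrreducible_of_K_eq_one_or_neg_one [NeZero N] {k : ZMod N} (hk : k ≠ 0) (j : ℕ)
    (hK : K k (j + 2) = 1 ∨ K k (j + 2) = -1) (hne : ∀ i ≤ j + 3, K k i ≠ 0) :
    ¬ MonomiallyIrreducible N := by
  intro hirr
  obtain ⟨hpos, hsol⟩ := monomialMinimalSize_spec k
  have hlarge : j + 5 ≤ monomialMinimalSize N k := by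
    by_contra! hsmall
    obtain ⟨i, hi⟩ := Nat.exists_eq_add_of_lt hpos
    rw [hi, zero_add] at hsol
    exact hne i (by omega) (K_eq_zero_of_isSolution hsol)
  exact (hirr k hk).2.1 (reducible_replicate (isSolution_cons_replicate_append k j hK) hlarge)

lemma map_K {N' : ℕ} (f : ZMod N →+* ZMod N') (x : ZMod N) (n : ℕ) :
    f (K x n) = K (f x) n := by
  induction n using Nat.twoStepInduction with
  | zero => simp [K]
  | one => simp [K]
  | more n ih₁ ih₂ => simp [K, ih₁, ih₂]

lemma K_two (x : ZMod N) : K x 2 = x * x - 1 := by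
  simp [K]

lemma K_three (x : ZMod N) : K x 3 = x * (x * x - 1) - x := by
  simp [K]

lemma K_four (x : ZMod N) : K x 4 = x * (x * (x * x - 1) - x) - (x * x - 1) := by
  simp [K]

lemma not_monomiallyIrreducible_of_mul_self_eq_zero [NeZero N] {k : ZMod N}
    (hk : k * k = 0) (h2k : 2 * k ≠ 0) : ¬ MonomiallyIrreducible N := by
  have hk0 : k ≠ 0 := by rintro rfl; simp at h2k
  have : Nontrivial (ZMod N) := nontrivial_of_ne k 0 hk0
  refine not_monomiallyIrreducible_of_K_eq_one_or_neg_one hk0 0 (Or.inr (by simp [K_two, hk])) fun i hi => ?_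
  interval_cases i
  · simp [K]
  · simpa [K] using hk0
  · simp [K_two, hk]
  · rw [K_three, hk]
    contrapose! h2k
    linear_combination -h2k

end

lemma not_monomiallyIrreducible_mul_of_dvd {p q : ℕ} (hp : ¬ p ∣ 2) (hpq : p ∣ q) (hq : q ≠ 0) :
    ¬ MonomiallyIrreducible (p * q) := by
  have : NeZero (p * q) := ⟨mul_ne_zero (by rintro rfl; exact hq (zero_dvd_iff.mp hpq)) hq⟩
  refine not_monomiallyIrreducible_of_mul_self_eq_zero (k := (q : ZMod (p * q))) ?_ ?_
  · rw [← Nat.cast_mul, ZMod.natCast_eq_zero_iff]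
    exact Nat.mul_dvd_mul_right hpq q
  · rw [← Nat.cast_ofNat, ← Nat.cast_mul, Ne, ZMod.natCast_eq_zero_iff,
      Nat.mul_dvd_mul_iff_right (Nat.pos_of_ne_zero hq)]
    exact hp

lemma not_monomiallyIrreducible_mul_of_golden {p m : ℕ} (hp : 1 < p) (hm : 1 < m)
    (hco : p.Coprime m) {ω : ZMod p} (hω : ω * ω = ω + 1) :
    ¬ MonomiallyIrreducible (p * m) := by
  have : NeZero (p * m) := ⟨by positivity⟩
  have : Fact (1 < p) := ⟨hp⟩
  have : Fact (1 < m) := ⟨hm⟩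
  let φ := ZMod.chineseRemainder hco
  set k := φ.symm (ω, -1)
  have hk : φ k = (ω, -1) := φ.apply_symm_apply _
  have hφK (i : ℕ) : φ (K k i) = (K ω i, K (-1) i) := by
    have h₁ := map_K ((RingHom.fst _ _).comp (φ : ZMod (p * m) →+* ZMod p × ZMod m)) k i
    have h₂ := map_K ((RingHom.snd _ _).comp (φ : ZMod (p * m) →+* ZMod p × ZMod m)) k i
    simp only [RingHom.comp_apply, RingHom.coe_fst, RingHom.coe_snd, RingEquiv.coe_toRingHom,
      hk] at h₁ h₂
    exact Prod.ext h₁ h₂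
  have hω0 : ω ≠ 0 := by rintro rfl; simp at hω
  have hω2 : K ω 2 = ω := by rw [K_two]; linear_combination hω
  have hω3 : K ω 3 = 1 := by rw [K_three]; linear_combination (ω + 1) * hω
  have hk0 : k ≠ 0 := fun h => by simpa [h] using congrArg Prod.snd hk
  have hK3 : K k 3 = 1 := φ.injective (by rw [hφK, map_one, hω3]; simp [K_three])
  refine not_monomiallyIrreducible_of_K_eq_one_or_neg_one hk0 1 (Or.inl hK3) fun i hi h0 => ?_
  have hφ0 := hφK i
  rw [h0, map_zero] at hφ0
  interval_cases i
  · simpa [K] using congrArg Prod.snd hφ0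
  · simpa [K] using congrArg Prod.snd hφ0
  · exact hω0 (by simpa [hω2] using (congrArg Prod.fst hφ0).symm)
  · simpa [K_three] using congrArg Prod.snd hφ0
  · simpa [K_four] using congrArg Prod.snd hφ0

lemma exists_mul_self_eq_add_one {F : Type*} [Field F] (h2 : (2 : F) ≠ 0)
    (h5 : IsSquare (5 : F)) : ∃ ω : F, ω * ω = ω + 1 := by
  obtain ⟨r, hr⟩ := h5
  refine ⟨(1 + r) / 2, ?_⟩
  field_simp
  linear_combination -hr

/-- Quadratic reciprocity: for `p ≠ 2, 5`, `5` is a square mod `p` iff `p` is a square mod `5`. -/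
lemma isSquare_five {p : ℕ} [Fact p.Prime] (h : p = 5 ∨ p % 5 = 1 ∨ p % 5 = 4) :
    IsSquare (5 : ZMod p) := by
  rcases h with rfl | h
  · exact ⟨0, rfl⟩
  have : Fact (Nat.Prime 5) := ⟨by norm_num⟩
  have hp2 : p ≠ 2 := by rintro rfl; omega
  have hsq := (ZMod.exists_sq_eq_prime_iff_of_mod_four_eq_one (p := 5) (q := p) rfl hp2).mp
  rw [← ZMod.natCast_mod] at hsq
  exact_mod_cast hsq (by rcases h with h | h <;> rw [h]; exacts [⟨1, rfl⟩, ⟨2, rfl⟩])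

theorem stmt7 (N p : ℕ) (hN : 2 ≤ N) (hnp : ¬ N.Prime) (hp : p.Prime)
    (hdvd : p ∣ N) (h : p = 5 ∨ p % 5 = 1 ∨ p % 5 = 4) :
    ¬ MonomiallyIrreducible N := by
  have : Fact p.Prime := ⟨hp⟩
  have hp2 : ¬ p ∣ 2 := fun h2 => by
    have := (Nat.prime_dvd_prime_iff_eq hp Nat.prime_two).mp h2
    omega
  obtain ⟨m, rfl⟩ := hdvd
  by_cases hpm : p ∣ m
  · exact not_monomiallyIrreducible_mul_of_dvd hp2 hpm (by rintro rfl; omega)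
  have hm : 1 < m := by
    rcases m with _ | _ | m
    · omega
    · exact absurd (by simpa using hp) hnp
    · omega
  have h2 : (2 : ZMod p) ≠ 0 := by exact_mod_cast (ZMod.natCast_eq_zero_iff 2 p).not.mpr hp2
  obtain ⟨ω, hω⟩ := exists_mul_self_eq_add_one h2 (isSquare_five h)
  exact not_monomiallyIrreducible_mul_of_golden hp.one_lt hm
    ((Nat.Prime.coprime_iff_not_dvd hp).mpr hpm) hω

end Monomial
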